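/- Fix n ≥ 1. For any partition of the index set {1,…,n} into a k-element subset I and its complement Ī, and any rational function f(z₁,…,zₙ) symmetric separately in the first k and last n−k arguments, the localization sum Σ_{I ∈ [n,k]} f(α_I; α_Ī)/∏_{i∈I, j∈Ī}(1 − α_i/α_j) is a symmetric rational function of (α₁,…,αₙ): it is invariant under every permutation of the αᵢ. -/

import Mathlib

/-!
A permutation `π` of the indices permutes the `k`-subsets, `I ↦ π(I)`, and the term of the
sum for `α ∘ π` at `I` is the term for `α` at `π(I)`. In the denominator this is a mere
reindexing, since `π` maps `Iᶜ` onto `π(I)ᶜ`. In the numerator, `π` carries the monotone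
enumeration of `I` to that of `π(I)` only up to a permutation of `Fin k` (and likewise for
the complements), which the separate symmetry of `f` absorbs.
-/

/-- The localization sum `Σ_{I∈[n,k]} f(α_I; α_Ī)/∏_{i∈I,j∈Ī}(1 - αᵢ/αⱼ)`, where for each
`k`-subset `I` the slots of `f` are filled using the monotone enumerations of `I` and its
complement. -/
noncomputable def locSum {F : Type*} [Field F] (n k : ℕ) (hk : k ≤ n)
    (f : (Fin k → F) → (Fin (n - k) → F) → F) (α : Fin n → F) : F :=
  ∑ I ∈ (Finset.powersetCard k (Finset.univ : Finset (Fin n))).attach,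
    f (fun j => α ((I.1.orderIsoOfFin ((Finset.mem_powersetCard.mp I.2).2) j : I.1) : Fin n))
      (fun j => α ((I.1ᶜ.orderIsoOfFin
        (by rw [Finset.card_compl, (Finset.mem_powersetCard.mp I.2).2, Fintype.card_fin])
        j : (I.1ᶜ : Finset (Fin n))) : Fin n)) /
    ∏ i ∈ I.1, ∏ j ∈ I.1ᶜ, (1 - α i / α j)

open Finset

lemma Finset.map_equiv_compl {α β : Type*} [Fintype α] [Fintype β] [DecidableEq α]
    [DecidableEq β] (e : α ≃ β) (s : Finset α) :
    (s.map e.toEmbedding)ᶜ = sᶜ.map e.toEmbedding := by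
  ext b
  simp [mem_map_equiv]

lemma Finset.exists_perm_orderIsoOfFin_of_equiv {α β : Type*} [LinearOrder α] [LinearOrder β]
    (e : α ≃ β) {s : Finset α} {t : Finset β} {k : ℕ} (hs : #s = k) (ht : #t = k)
    (hst : ∀ a, a ∈ s ↔ e a ∈ t) :
    ∃ σ : Equiv.Perm (Fin k), ∀ j, e (s.orderIsoOfFin hs j) = t.orderIsoOfFin ht (σ j) :=
  ⟨(s.orderIsoOfFin hs).toEquiv.trans ((e.subtypeEquiv hst).trans (t.orderIsoOfFin ht).symm),
    fun j => by simp [-coe_orderIsoOfFin_apply]⟩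

lemma Finset.card_compl_fin {n k : ℕ} {s : Finset (Fin n)} (hs : #s = k) : #sᶜ = n - k := by
  rw [card_compl, hs, Fintype.card_fin]

theorem stmt_14_general {F : Type*} [Field F] (n k : ℕ) (hk : k ≤ n)
    (f : (Fin k → F) → (Fin (n - k) → F) → F)
    (hsym : ∀ (x : Fin k → F) (y : Fin (n - k) → F)
        (σ : Equiv.Perm (Fin k)) (τ : Equiv.Perm (Fin (n - k))),
        f (x ∘ σ) (y ∘ τ) = f x y)
    (α : Fin n → F)
    (π : Equiv.Perm (Fin n)) :
    locSum n k hk f (α ∘ π) = locSum n k hk f α := by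
  let ε : powersetCard k (univ : Finset (Fin n)) ≃ powersetCard k (univ : Finset (Fin n)) :=
    π.finsetCongr.subtypeEquiv fun s => by simp
  refine Fintype.sum_equiv ε _ _ fun I => ?_
  have hI : #I.1 = k := (mem_powersetCard.mp I.2).2
  have hπI : #(I.1.map π.toEmbedding) = k := by rw [card_map, hI]
  obtain ⟨σ, hσ⟩ := exists_perm_orderIsoOfFin_of_equiv π hI hπI fun a => by simp
  obtain ⟨τ, hτ⟩ := exists_perm_orderIsoOfFin_of_equiv π (card_compl_fin hI)
    (card_compl_fin hπI) fun a => by simp [map_equiv_compl]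
  congr 1
  · calc _ = f ((fun j => α ((I.1.map π.toEmbedding).orderIsoOfFin hπI j : Fin n)) ∘ σ)
            ((fun j => α ((I.1.map π.toEmbedding)ᶜ.orderIsoOfFin (card_compl_fin hπI) j :
              Fin n)) ∘ τ) := by
          congr 1 <;> funext j
          exacts [congrArg α (hσ j), congrArg α (hτ j)]
      _ = _ := hsym _ _ σ τ
  · simp only [ε, Equiv.subtypeEquiv_apply, Equiv.finsetCongr_apply, map_equiv_compl, prod_map]
    rfl

/-- For `f` symmetric separately in its first `k` and last `n-k` arguments, and distinct
nonzero `α₁,…,αₙ`, the localization sum is a symmetric function of `(α₁,…,αₙ)`: it is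
invariant under every permutation of the `αᵢ`. -/
theorem stmt_14 {F : Type*} [Field F] (n k : ℕ) (hk : k ≤ n)
    (f : (Fin k → F) → (Fin (n - k) → F) → F)
    (hsym : ∀ (x : Fin k → F) (y : Fin (n - k) → F)
        (σ : Equiv.Perm (Fin k)) (τ : Equiv.Perm (Fin (n - k))),
        f (x ∘ σ) (y ∘ τ) = f x y)
    (α : Fin n → F) (hinj : Function.Injective α) (h0 : ∀ i, α i ≠ 0)
    (π : Equiv.Perm (Fin n)) :
    locSum n k hk f (α ∘ π) = locSum n k hk f α :=
  stmt_14_general n k hk f hsym α π
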